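/- For n ∈ ℕ, x > 0, and 0 ≤ β < 1, the Jain basis functions L_{n,k}^{(β)}(x) = (nx (nx + βk)^{k-1} / k!) e^{-(nx + βk)} satisfy Σ_{k=0}^∞ L_{n,k}^{(β)}(x) = 1. -/

import Mathlib

/-!
Put `c_k = α + β k` with `α = n x`. The `k`-th term is `α / c_k` times the Poisson weight
`e^{-c_k} c_k^k / k!`, hence, by the Poisson limit theorem, the limit as `m → ∞` of `α / c_k`
times the binomial weight `C(m,k) (c_k/m)^k (1 - c_k/m)^(m-k)`. For each `m` these approximations
sum to `1`: this is Abel's identity `∑ C(m,k) x (x+kz)^(k-1) (y-kz)^(m-k) = (x+y)^m` at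
`x = α`, `z = β`, `y = m - α`. Tannery's theorem lets the limit pass through the sum: the entropy
bound `C(m,k) k^k (m-k)^(m-k) ≤ m^m` dominates the approximations by `((c_k/k) e^{1-β})^k`, which
is summable by the root test because `β e^{1-β} < 1`.

Abel's identity follows by induction from differentiating in `y` and evaluating at `y = -x`, where
it becomes an `(m+1)`-st finite difference of a polynomial of degree `m`.
-/

open Real Filter Topology Finset Polynomial

theorem alternating_sum_choose_mul_affine_pow_eq_zero {R : Type*} [CommRing R] {j n : ℕ}
    (h : j < n) (a b : R) :
    ∑ k ∈ range (n + 1), (-1) ^ (n - k) * n.choose k * (a + b * k) ^ j = 0 := by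
  have hdeg : ((C b * X + C a) ^ j).natDegree < n := calc
    _ ≤ j * (C b * X + C a).natDegree := natDegree_pow_le
    _ ≤ j * 1 := Nat.mul_le_mul_left j natDegree_linear_le
    _ < n := by simpa using h
  have := congr_fun (fwdDiff_iter_eq_zero_of_degree_lt hdeg) 0
  rw [fwdDiff_iter_eq_sum_shift] at this
  simpa [add_comm a, mul_comm b] using this

/-- `x (x + z k)^(k-1)`, with the `k = 0` term read as `1`. -/
def abelWeight (x z : ℝ) : ℕ → ℝ
  | 0 => 1
  | k + 1 => x * (x + z * (k + 1 : ℕ)) ^ k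

def abelSum (x z : ℝ) (n : ℕ) (y : ℝ) : ℝ :=
  ∑ k ∈ range (n + 1), n.choose k * abelWeight x z k * (y - z * k) ^ (n - k)

section Abel

variable (x z : ℝ)

lemma abelWeight_mul_pow {n k : ℕ} (hk : k ≤ n + 1) :
    abelWeight x z k * (x + z * k) ^ (n + 1 - k) = x * (x + z * k) ^ n := by
  cases k with
  | zero => simp [abelWeight, pow_succ']
  | succ j =>
    rw [abelWeight, mul_assoc, ← pow_add, Nat.add_sub_add_right, Nat.add_sub_of_le (by omega)]

lemma abelWeight_eq_div_mul_pow {k : ℕ} (hk : x + z * k ≠ 0) :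
    abelWeight x z k = x / (x + z * k) * (x + z * k) ^ k := by
  cases k with
  | zero => simp_all [abelWeight]
  | succ j => rw [abelWeight, pow_succ]; field_simp

lemma abelSum_succ_neg (n : ℕ) : abelSum x z (n + 1) (-x) = 0 := by
  have hterm : ∀ k ∈ range (n + 2),
      (n + 1).choose k * abelWeight x z k * (-x - z * k) ^ (n + 1 - k)
        = x * ((-1) ^ (n + 1 - k) * (n + 1).choose k * (x + z * k) ^ n) := by
    intro k hk
    have hk : k ≤ n + 1 := Nat.lt_succ_iff.mp (mem_range.mp hk)
    rw [show -x - z * k = -1 * (x + z * k) by ring, mul_pow]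
    linear_combination ((-1) ^ (n + 1 - k) * ((n + 1).choose k : ℝ)) * abelWeight_mul_pow x z hk
  rw [abelSum, sum_congr rfl hterm, ← mul_sum,
    alternating_sum_choose_mul_affine_pow_eq_zero (by omega), mul_zero]

lemma hasDerivAt_abelSum (n : ℕ) (y : ℝ) :
    HasDerivAt (abelSum x z (n + 1)) ((n + 1) * abelSum x z n y) y := by
  have h := HasDerivAt.fun_sum (u := range (n + 2)) fun k _ =>
    (((hasDerivAt_id y).sub_const (z * k)).pow (n + 1 - k)).const_mul
      ((n + 1).choose k * abelWeight x z k)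
  refine h.congr_deriv ?_
  rw [sum_range_succ, abelSum, mul_sum]
  simp only [Nat.sub_self, Nat.cast_zero, zero_mul, mul_zero, add_zero, id]
  refine sum_congr rfl fun k hk => ?_
  have hk : k ≤ n := Nat.lt_succ_iff.mp (mem_range.mp hk)
  have hchoose : ((n + 1).choose k : ℝ) * (n + 1 - k : ℕ) = (n + 1) * n.choose k := by
    exact_mod_cast (Nat.choose_mul_succ_eq n k).symm.trans (mul_comm _ _)
  rw [show n + 1 - k - 1 = n - k by omega]
  linear_combination (abelWeight x z k * (y - z * k) ^ (n - k)) * hchoose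

theorem abelSum_eq_add_pow (n : ℕ) (y : ℝ) : abelSum x z n y = (x + y) ^ n := by
  induction n generalizing y with
  | zero => simp [abelSum, abelWeight]
  | succ n ih =>
    have hderiv : ∀ w, HasDerivAt (fun w => abelSum x z (n + 1) w - (x + w) ^ (n + 1)) 0 w := by
      intro w
      refine ((hasDerivAt_abelSum x z n w).sub
        (((hasDerivAt_id w).const_add x).pow (n + 1))).congr_deriv ?_
      simp [ih]
    have := is_const_of_deriv_eq_zero (fun w => (hderiv w).differentiableAt)
      (fun w => (hderiv w).deriv) y (-x)
    simpa [abelSum_succ_neg, sub_eq_zero] using this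

end Abel

theorem Nat.choose_mul_pow_self_mul_pow_self_le (m k : ℕ) :
    m.choose k * k ^ k * (m - k) ^ (m - k) ≤ m ^ m := by
  rcases lt_or_ge m k with hmk | hkm
  · simp [Nat.choose_eq_zero_of_lt hmk]
  calc m.choose k * k ^ k * (m - k) ^ (m - k)
      = k ^ k * (m - k) ^ (m - k) * m.choose k := by ring
    _ ≤ ∑ j ∈ range (m + 1), k ^ j * (m - k) ^ (m - j) * m.choose j :=
      single_le_sum (f := fun j => k ^ j * (m - k) ^ (m - j) * m.choose j)
        (fun _ _ => Nat.zero_le _) (mem_range.mpr (by omega))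
    _ = (k + (m - k)) ^ m := by simp [add_pow]
    _ = m ^ m := by rw [Nat.add_sub_of_le hkm]

lemma sub_pow_le_pow_mul_exp_neg {N : ℕ} {t : ℝ} (ht : t ≤ N) :
    (N - t) ^ N ≤ (N : ℝ) ^ N * exp (-t) := by
  rcases eq_or_ne N 0 with rfl | hN
  · simpa using one_le_exp (neg_nonneg.mpr (by simpa using ht))
  have hN' : (N : ℝ) ≠ 0 := by exact_mod_cast hN
  calc (N - t) ^ N = (N : ℝ) ^ N * (1 - t / N) ^ N := by rw [← mul_pow]; field_simp
    _ ≤ (N : ℝ) ^ N * exp (-t) := by gcongr; exact one_sub_div_pow_le_exp_neg ht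

lemma choose_mul_div_pow_mul_one_sub_pow_le {m k : ℕ} {c : ℝ} (hc : 0 ≤ c) (hcm : c ≤ m) :
    m.choose k * (c / m) ^ k * (1 - c / m) ^ (m - k) ≤ (c / k) ^ k * exp (k - c) := by
  rcases lt_or_ge m k with hmk | hkm
  · simp only [Nat.choose_eq_zero_of_lt hmk, Nat.cast_zero, zero_mul]
    positivity
  rcases eq_or_ne m 0 with rfl | hm
  · obtain rfl : k = 0 := by omega
    simp [le_antisymm (by simpa using hcm) hc]
  have hm' : (m : ℝ) ≠ 0 := by exact_mod_cast hm
  have hkk : (k : ℝ) ^ k ≠ 0 := by cases k <;> simp [Nat.cast_add_one_ne_zero]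
  have hexp : (m - c) ^ (m - k) ≤ ((m - k : ℕ) : ℝ) ^ (m - k) * exp (k - c) := by
    have := sub_pow_le_pow_mul_exp_neg (N := m - k) (t := c - k)
      (by push_cast [Nat.cast_sub hkm]; linarith)
    rwa [show ((m - k : ℕ) : ℝ) - (c - k) = m - c by push_cast [Nat.cast_sub hkm]; ring,
      neg_sub] at this
  have hent : (m.choose k : ℝ) * k ^ k * ((m - k : ℕ) : ℝ) ^ (m - k) ≤ (m : ℝ) ^ m := by
    exact_mod_cast Nat.choose_mul_pow_self_mul_pow_self_le m k
  calc m.choose k * (c / m) ^ k * (1 - c / m) ^ (m - k)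
      = m.choose k * c ^ k * (m - c) ^ (m - k) / (m : ℝ) ^ m := by
        rw [← pow_mul_pow_sub (m : ℝ) hkm, one_sub_div hm', div_pow, div_pow]
        field_simp
    _ ≤ m.choose k * c ^ k * (((m - k : ℕ) : ℝ) ^ (m - k) * exp (k - c)) / (m : ℝ) ^ m := by
        gcongr
    _ = (m.choose k * k ^ k * ((m - k : ℕ) : ℝ) ^ (m - k)) * ((c / k) ^ k * exp (k - c))
          / (m : ℝ) ^ m := by
        rw [div_pow]; field_simp
    _ ≤ (m : ℝ) ^ m * ((c / k) ^ k * exp (k - c)) / (m : ℝ) ^ m := by gcongr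
    _ = (c / k) ^ k * exp (k - c) := by field_simp

lemma summable_pow_self_of_tendsto {a : ℕ → ℝ} {L : ℝ} (ha : Tendsto a atTop (𝓝 L))
    (hL : |L| < 1) : Summable fun k => a k ^ k := by
  obtain ⟨r, hLr, hr1⟩ := exists_between hL
  refine .of_norm_bounded_eventually_nat
    (summable_geometric_of_lt_one ((abs_nonneg L).trans hLr.le) hr1) ?_
  filter_upwards [(continuous_abs.tendsto L |>.comp ha).eventually (gt_mem_nhds hLr)] with k hk
  rw [norm_pow, Real.norm_eq_abs]
  exact pow_le_pow_left₀ (abs_nonneg _) hk.le k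

lemma mul_exp_one_sub_lt_one {β : ℝ} (hβ : β ≠ 1) : β * exp (1 - β) < 1 := by
  have := add_one_lt_exp (sub_ne_zero.mpr hβ)
  rw [sub_add_cancel] at this
  calc β * exp (1 - β) < exp (β - 1) * exp (1 - β) := by gcongr
    _ = 1 := by rw [← exp_add, sub_add_sub_cancel, sub_self, exp_zero]

/-- `L_{n,k}^{(β)}(x)` for `α = n x`, written as `α / c` times the Poisson weight at `c = α + β k`. -/
noncomputable def jainWeight (α β : ℝ) (k : ℕ) : ℝ :=
  α / (α + β * k) * (exp (-(α + β * k)) * (α + β * k) ^ k / k.factorial)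

noncomputable def jainApprox (α β : ℝ) (m k : ℕ) : ℝ :=
  α / (α + β * k) * (m.choose k * ((α + β * k) / m) ^ k * (1 - (α + β * k) / m) ^ (m - k))

noncomputable def jainBound (α β : ℝ) (k : ℕ) : ℝ :=
  ((α + β * k) / k * exp (1 - β)) ^ k

section Jain

variable {α β : ℝ}

lemma tendsto_jainApprox (k : ℕ) :
    Tendsto (fun m => jainApprox α β m k) atTop (𝓝 (jainWeight α β k)) := by
  have hp : Tendsto (fun m : ℕ => (m : ℝ) * ((α + β * k) / m)) atTop (𝓝 (α + β * k)) := by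
    refine tendsto_const_nhds.congr' ?_
    filter_upwards [eventually_ne_atTop 0] with m hm
    field_simp
  exact (ProbabilityTheory.tendsto_choose_mul_pow_of_tendsto_mul_atTop k hp).const_mul _

lemma tsum_jainApprox (hα : 0 < α) (hβ : 0 ≤ β) {m : ℕ} (hm : m ≠ 0) :
    ∑' k, jainApprox α β m k = 1 := by
  have hm' : (m : ℝ) ≠ 0 := by exact_mod_cast hm
  rw [tsum_eq_sum (s := range (m + 1)) fun k hk => by
    simp [jainApprox, Nat.choose_eq_zero_of_lt (by simpa using hk)]]
  calc ∑ k ∈ range (m + 1), jainApprox α β m k = abelSum α β m (m - α) / (m : ℝ) ^ m := by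
        rw [abelSum, sum_div]
        refine sum_congr rfl fun k hk => ?_
        have hkm : k ≤ m := Nat.lt_succ_iff.mp (mem_range.mp hk)
        have hc : α + β * k ≠ 0 := by positivity
        rw [jainApprox, abelWeight_eq_div_mul_pow α β hc, ← pow_mul_pow_sub (m : ℝ) hkm,
          one_sub_div hm', div_pow, div_pow]
        field_simp
        ring
    _ = 1 := by rw [abelSum_eq_add_pow, add_sub_cancel, div_self (pow_ne_zero _ hm')]

lemma norm_jainApprox_le_jainBound (hα : 0 < α) (hβ : 0 ≤ β) {m : ℕ} (hm : α + β * m ≤ m)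
    (k : ℕ) : ‖jainApprox α β m k‖ ≤ jainBound α β k := by
  rcases lt_or_ge m k with hmk | hkm
  · simp only [jainApprox, Nat.choose_eq_zero_of_lt hmk, Nat.cast_zero, zero_mul, mul_zero,
      norm_zero, jainBound]
    positivity
  have hc : 0 < α + β * k := by positivity
  have hcm : α + β * k ≤ m := by
    nlinarith [mul_le_mul_of_nonneg_left (Nat.cast_le.mpr hkm : (k : ℝ) ≤ m) hβ]
  have hq : 0 ≤ 1 - (α + β * k) / m :=
    sub_nonneg.mpr (div_le_one_of_le₀ hcm (hc.trans_le hcm).le)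
  have hnonneg : 0 ≤ jainApprox α β m k := by
    unfold jainApprox
    positivity
  rw [Real.norm_of_nonneg hnonneg]
  calc jainApprox α β m k ≤ 1 * (((α + β * k) / k) ^ k * exp (k - (α + β * k))) :=
        mul_le_mul (div_le_one_of_le₀ (by nlinarith) hc.le)
          (choose_mul_div_pow_mul_one_sub_pow_le hc.le hcm) (by positivity) zero_le_one
    _ ≤ jainBound α β k := by
        rw [one_mul, jainBound, mul_pow, ← exp_nat_mul]
        gcongr
        nlinarith

lemma summable_jainBound (hβ0 : 0 ≤ β) (hβ1 : β < 1) : Summable (jainBound α β) := by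
  have hlim : Tendsto (fun k : ℕ => (α + β * k) / k * exp (1 - β)) atTop
      (𝓝 (β * exp (1 - β))) := by
    have h := ((tendsto_const_div_atTop_nhds_zero_nat α).const_add β).mul_const (exp (1 - β))
    rw [add_zero] at h
    refine h.congr' ?_
    filter_upwards [eventually_ne_atTop 0] with k hk
    field_simp
    ring
  refine summable_pow_self_of_tendsto hlim ?_
  rw [abs_of_nonneg (by positivity)]
  exact mul_exp_one_sub_lt_one hβ1.ne

theorem tsum_jainWeight (hα : 0 < α) (hβ0 : 0 ≤ β) (hβ1 : β < 1) :
    ∑' k, jainWeight α β k = 1 := by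
  have hbound : ∀ᶠ m : ℕ in atTop, ∀ k, ‖jainApprox α β m k‖ ≤ jainBound α β k := by
    filter_upwards [(tendsto_natCast_atTop_atTop.const_mul_atTop
      (sub_pos.mpr hβ1)).eventually_ge_atTop α] with m hm
    exact norm_jainApprox_le_jainBound hα hβ0 (by linarith)
  have hlim := tendsto_tsum_of_dominated_convergence (summable_jainBound hβ0 hβ1)
    tendsto_jainApprox hbound
  have hone : (fun m => ∑' k, jainApprox α β m k) =ᶠ[atTop] fun _ => 1 := by
    filter_upwards [eventually_ne_atTop 0] with m hm using tsum_jainApprox hα hβ0 hm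
  exact tendsto_nhds_unique hlim (tendsto_const_nhds.congr' hone.symm)

end Jain

/-- The Jain basis functions `L_{n,k}^{(β)}(x) = (nx (nx+βk)^{k-1}/k!) e^{-(nx+βk)}`
sum to one. -/
theorem jain_basis_sum_one (n : ℕ) (hn : 0 < n) (x β : ℝ) (hx : 0 < x)
    (hβ0 : 0 ≤ β) (hβ1 : β < 1) :
    ∑' k : ℕ,
      (n * x * (n * x + β * k) ^ ((k : ℝ) - 1) / (Nat.factorial k : ℝ)) *
        Real.exp (-(n * x + β * k)) = 1 := by
  have hα : 0 < (n : ℝ) * x := by positivity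
  have hterm : ∀ k : ℕ, (n * x * (n * x + β * k) ^ ((k : ℝ) - 1) / (Nat.factorial k : ℝ)) *
      Real.exp (-(n * x + β * k)) = jainWeight (n * x) β k := by
    intro k
    have hc : (n : ℝ) * x + β * k ≠ 0 := by positivity
    rw [jainWeight, rpow_sub_one hc, rpow_natCast]
    field_simp
  rw [tsum_congr hterm]
  exact tsum_jainWeight hα hβ0 hβ1
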